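/- Let F be a field and p_F, p_G, q, r_F, r_G ∈ F[λ] with p_F·p_G ≠ 0 and r_F·r_G ≠ 0, and suppose p_F·r_F is coprime to p_G·r_G. Set m = Ω(p_F) and n = Ω(r_F). Then for all natural numbers α, β with α + β = m + n and min(m,n) ≤ α, β ≤ max(m,n), there exist polynomials p̃_F, r̃_F, q̃ ∈ F[λ] such that p̃_F·r̃_F is a nonzero scalar multiple of p_F·r_F, Ω(p̃_F) = α, Ω(r̃_F) = β, and the 2×2 upper triangular matrix polynomial [[p̃_F·p_G, q̃],[0, r̃_F·r_G]] is unimodularly equivalent to [[p_F·p_G, q],[0, r_F·r_G]]. -/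

import Mathlib

open Polynomial

/-- Unimodular equivalence of square matrix polynomials. -/
def UnimodEquiv {F : Type*} [Field F] {n : ℕ}
    (P Q : Matrix (Fin n) (Fin n) F[X]) : Prop :=
  ∃ U V : Matrix (Fin n) (Fin n) F[X], IsUnit U.det ∧ IsUnit V.det ∧ Q = U * P * V

/-- `Ω(p)`: the number of irreducible factors of `p` counted with multiplicity,
i.e. the cardinality of the multiset of normalized irreducible factors of `p`. -/
noncomputable def OmegaCount {F : Type*} [Field F] (p : F[X]) : ℕ :=
  letI := Classical.decEq F
  (UniqueFactorizationMonoid.normalizedFactors p).card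

open UniqueFactorizationMonoid

/-!
Both matrices have the same determinant and, by construction, the same ideal of entries
`(g)`; over the PID `F[λ]` a triangular `2 × 2` matrix is determined up to equivalence by these
two invariants, being equivalent to `diag(g, det / g)`. Coprimality of `p_F r_F` and `p_G r_G`
splits `g = g₁ g₂` with `g₁ ∣ p_F, r_F` and `g₂ ∣ p_G, r_G`. Keeping one copy of `g₁` in each of
`p̃_F`, `r̃_F` and distributing the remaining irreducible factors of `p_F r_F / g₁²` freely
produces every admissible pair `(α, β)`, and `q̃ = g` keeps the ideal of entries equal to `(g)`.
-/

section Divisibility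

variable {R : Type*}

theorem Ideal.dvd_of_span_eq_span_singleton [CommSemiring R] {s : Set R} {g x : R}
    (h : Ideal.span s = Ideal.span {g}) (hx : x ∈ s) : g ∣ x :=
  Ideal.mem_span_singleton.mp (h ▸ Ideal.subset_span hx)

theorem Ideal.span_triple_eq_span_singleton_of_dvd [CommSemiring R] {a g b : R} (ha : g ∣ a)
    (hb : g ∣ b) : Ideal.span {a, g, b} = Ideal.span {g} :=
  le_antisymm
    (Ideal.span_le.mpr <| by simp [Set.insert_subset_iff, Ideal.mem_span_singleton, ha, hb])
    (Ideal.span_mono (by simp))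

theorem exists_mul_eq_of_isCoprime [CommSemiring R] [DecompositionMonoid R] {a b c d g : R}
    (hcop : IsCoprime (a * c) (b * d)) (hab : g ∣ a * b) (hcd : g ∣ c * d) :
    ∃ g₁ g₂, g = g₁ * g₂ ∧ g₁ ∣ a ∧ g₁ ∣ c ∧ g₂ ∣ b ∧ g₂ ∣ d := by
  have hg : g ∣ (a * c) * (b * d) := hab.trans ⟨c * d, by ring⟩
  obtain ⟨g₁, g₂, h₁, h₂, rfl⟩ := exists_dvd_and_dvd_of_dvd_mul hg
  have hcop₁ : IsCoprime g₁ (b * d) := hcop.of_isCoprime_of_dvd_left h₁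
  have hcop₂ : IsCoprime g₂ (a * c) := hcop.symm.of_isCoprime_of_dvd_left h₂
  refine ⟨g₁, g₂, rfl, ?_, ?_, ?_, ?_⟩
  · exact (hcop₁.of_isCoprime_of_dvd_right (dvd_mul_right b d)).dvd_of_dvd_mul_right
      ((dvd_mul_right g₁ g₂).trans hab)
  · exact (hcop₁.of_isCoprime_of_dvd_right (dvd_mul_left d b)).dvd_of_dvd_mul_right
      ((dvd_mul_right g₁ g₂).trans hcd)
  · exact (hcop₂.of_isCoprime_of_dvd_right (dvd_mul_right a c)).dvd_of_dvd_mul_left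
      ((dvd_mul_left g₂ g₁).trans hab)
  · exact (hcop₂.of_isCoprime_of_dvd_right (dvd_mul_left c a)).dvd_of_dvd_mul_left
      ((dvd_mul_left g₂ g₁).trans hcd)

/-- Take for `s` the product of the prime factors of `a` that do not divide `q`. -/
theorem exists_isCoprime_add_mul [CommRing R] [IsDomain R] [IsPrincipalIdealRing R]
    {a q b x y z : R} (ha : a ≠ 0) (h : x * a + y * q + z * b = 1) :
    ∃ s, IsCoprime a (q + s * b) := by
  classical
  set s := ∏ p ∈ (factors a).toFinset.filter (¬ · ∣ q), p
  refine ⟨s, isCoprime_of_prime_dvd (fun h0 => ha h0.1) fun π hπ hπa hπc => ?_⟩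
  by_cases hπq : π ∣ q
  · have hπs : ¬ π ∣ s := by
      intro hπs
      obtain ⟨τ, hτ, hπτ⟩ := hπ.exists_mem_finset_dvd hπs
      rw [Finset.mem_filter, Multiset.mem_toFinset] at hτ
      exact hτ.2 ((hπ.irreducible.associated_of_dvd (irreducible_of_factor τ hτ.1) hπτ).symm.dvd
        |>.trans hπq)
    have hπb : π ∣ b := (hπ.dvd_or_dvd ((dvd_add_right hπq).mp hπc)).resolve_left hπs
    exact hπ.not_isUnit (isUnit_of_dvd_one (h ▸ dvd_add (dvd_add (hπa.mul_left x)
      (hπq.mul_left y)) (hπb.mul_left z)))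
  · obtain ⟨τ, hτ, hπτ⟩ := exists_mem_factors_of_dvd ha hπ.irreducible hπa
    have hπs : π ∣ s := hπτ.dvd.trans <| Finset.dvd_prod_of_mem _ <|
      Finset.mem_filter.mpr ⟨Multiset.mem_toFinset.mpr hτ, fun hτq => hπq (hπτ.dvd.trans hτq)⟩
    exact hπq ((dvd_add_left (hπs.mul_right b)).mp hπc)

end Divisibility

section Unimodular

variable {F : Type*} [Field F]

theorem UnimodEquiv.symm {k : ℕ} {P Q : Matrix (Fin k) (Fin k) F[X]} (h : UnimodEquiv P Q) :
    UnimodEquiv Q P := by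
  obtain ⟨U, V, hU, hV, rfl⟩ := h
  refine ⟨U⁻¹, V⁻¹, ?_, ?_, ?_⟩
  · rw [Matrix.det_nonsing_inv]; exact isUnit_ringInverse.mpr hU
  · rw [Matrix.det_nonsing_inv]; exact isUnit_ringInverse.mpr hV
  · rw [Matrix.mul_assoc, Matrix.mul_assoc, Matrix.mul_nonsing_inv _ hV, Matrix.mul_one,
      ← Matrix.mul_assoc, Matrix.nonsing_inv_mul _ hU, Matrix.one_mul]

theorem UnimodEquiv.trans {k : ℕ} {P Q R : Matrix (Fin k) (Fin k) F[X]}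
    (h₁ : UnimodEquiv P Q) (h₂ : UnimodEquiv Q R) : UnimodEquiv P R := by
  obtain ⟨U, V, hU, hV, rfl⟩ := h₁
  obtain ⟨U', V', hU', hV', rfl⟩ := h₂
  refine ⟨U' * U, V * V', ?_, ?_, ?_⟩
  · rw [Matrix.det_mul]; exact hU'.mul hU
  · rw [Matrix.det_mul]; exact hV.mul hV'
  · simp only [Matrix.mul_assoc]

theorem UnimodEquiv.smul {k : ℕ} (g : F[X]) {P Q : Matrix (Fin k) (Fin k) F[X]}
    (h : UnimodEquiv P Q) : UnimodEquiv (g • P) (g • Q) := by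
  obtain ⟨U, V, hU, hV, rfl⟩ := h
  exact ⟨U, V, hU, hV, by rw [Matrix.mul_smul, Matrix.smul_mul]⟩

theorem unimodEquiv_diag_one_mul {a q b x y z : F[X]} (ha : a ≠ 0)
    (h : x * a + y * q + z * b = 1) : UnimodEquiv !![a, q; 0, b] !![1, 0; 0, a * b] := by
  obtain ⟨s, u, v, huv⟩ := exists_isCoprime_add_mul ha h
  refine ⟨!![1, 0; -(v * b), 1] * !![1, s; 0, 1], !![u, -(q + s * b); v, a], ?_, ?_, ?_⟩
  · rw [Matrix.det_mul, Matrix.det_fin_two_of, Matrix.det_fin_two_of]; simp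
  · rw [Matrix.det_fin_two_of, show u * a - -(q + s * b) * v = 1 by linear_combination huv]
    exact isUnit_one
  · ext i j : 1
    fin_cases i <;> fin_cases j <;> simp
    · linear_combination -huv
    · ring
    · linear_combination (v * b) * huv
    · ring

theorem unimodEquiv_diag_of_span_eq {a q b g c : F[X]} (ha : a ≠ 0)
    (hg : Ideal.span {a, q, b} = Ideal.span {g}) (hc : g * c = a * b) :
    UnimodEquiv !![a, q; 0, b] !![g, 0; 0, c] := by
  obtain ⟨a₁, rfl⟩ := Ideal.dvd_of_span_eq_span_singleton hg (by simp : a ∈ _)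
  obtain ⟨q₁, rfl⟩ := Ideal.dvd_of_span_eq_span_singleton hg (by simp : q ∈ _)
  obtain ⟨b₁, rfl⟩ := Ideal.dvd_of_span_eq_span_singleton hg (by simp : b ∈ _)
  have hg₀ : g ≠ 0 := left_ne_zero_of_mul ha
  have hgmem : g ∈ Ideal.span {g * a₁, g * q₁, g * b₁} := hg ▸ Ideal.mem_span_singleton_self g
  obtain ⟨x, w, hw, hx⟩ := Ideal.mem_span_insert.mp hgmem
  obtain ⟨y, z, rfl⟩ := Ideal.mem_span_pair.mp hw
  have hbez : x * a₁ + y * q₁ + z * b₁ = 1 :=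
    mul_left_cancel₀ hg₀ (by linear_combination -hx)
  have hc₁ : c = g * (a₁ * b₁) := mul_left_cancel₀ hg₀ (by linear_combination hc)
  convert (unimodEquiv_diag_one_mul (right_ne_zero_of_mul ha) hbez).smul g using 1 <;>
    ext i j <;> fin_cases i <;> fin_cases j <;> simp [hc₁]

theorem unimodEquiv_of_span_eq_of_mul_eq {a q b a' q' b' : F[X]} (ha : a ≠ 0) (ha' : a' ≠ 0)
    (hspan : Ideal.span {a, q, b} = Ideal.span {a', q', b'}) (hdet : a * b = a' * b') :
    UnimodEquiv !![a, q; 0, b] !![a', q'; 0, b'] := by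
  obtain ⟨g, hg⟩ := (IsPrincipalIdealRing.principal (Ideal.span {a, q, b})).principal
  obtain ⟨c, hc⟩ := (Ideal.dvd_of_span_eq_span_singleton hg (by simp : a ∈ _)).mul_right b
  exact (unimodEquiv_diag_of_span_eq ha hg hc.symm).trans
    (unimodEquiv_diag_of_span_eq ha' (hspan ▸ hg) (hdet ▸ hc.symm)).symm

end Unimodular

section OmegaCount

variable {F : Type*} [Field F]

theorem omegaCount_mul {x y : F[X]} (hx : x ≠ 0) (hy : y ≠ 0) :
    OmegaCount (x * y) = OmegaCount x + OmegaCount y := by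
  let _ := Classical.decEq F
  show (normalizedFactors (x * y)).card = (normalizedFactors x).card + (normalizedFactors y).card
  rw [normalizedFactors_mul hx hy, Multiset.card_add]

theorem exists_mul_eq_of_le_omegaCount {x : F[X]} (hx : x ≠ 0) {t : ℕ}
    (ht : t ≤ OmegaCount x) : ∃ d e, x = d * e ∧ OmegaCount d = t := by
  let _ := Classical.decEq F
  obtain ⟨S, hS⟩ := Multiset.card_pos_iff_exists_mem.mp <| by
    rw [Multiset.card_powersetCard]; exact Nat.choose_pos ht
  obtain ⟨hSle, hScard⟩ := Multiset.mem_powersetCard.mp hS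
  obtain ⟨e, he⟩ := (Multiset.prod_dvd_prod_of_le hSle).trans (prod_normalizedFactors hx).dvd
  refine ⟨S.prod, e, he, ?_⟩
  show (normalizedFactors S.prod).card = t
  have hirr : ∀ p ∈ S, Irreducible p :=
    fun p hp => irreducible_of_normalized_factor p (Multiset.mem_of_le hSle hp)
  rw [normalizedFactors_prod_eq S hirr, Multiset.card_map, hScard]

theorem exists_omegaCount_redistribution {a b g : F[X]} (ha : a ≠ 0) (hb : b ≠ 0)
    (hga : g ∣ a) (hgb : g ∣ b) {α : ℕ} (h₁ : min (OmegaCount a) (OmegaCount b) ≤ α)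
    (h₂ : α ≤ max (OmegaCount a) (OmegaCount b)) :
    ∃ d e, a * b = g * d * (g * e) ∧ OmegaCount (g * d) = α ∧
      OmegaCount (g * e) = OmegaCount a + OmegaCount b - α := by
  obtain ⟨u, rfl⟩ := hga
  obtain ⟨v, rfl⟩ := hgb
  have hg : g ≠ 0 := left_ne_zero_of_mul ha
  have hu : u ≠ 0 := right_ne_zero_of_mul ha
  have hv : v ≠ 0 := right_ne_zero_of_mul hb
  rw [omegaCount_mul hg hu, omegaCount_mul hg hv] at h₁ h₂ ⊢
  obtain ⟨d, e, hde, hd⟩ := exists_mul_eq_of_le_omegaCount (mul_ne_zero hu hv)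
    (t := α - OmegaCount g) (by rw [omegaCount_mul hu hv]; omega)
  have hd₀ : d ≠ 0 := left_ne_zero_of_mul (hde ▸ mul_ne_zero hu hv)
  have he₀ : e ≠ 0 := right_ne_zero_of_mul (hde ▸ mul_ne_zero hu hv)
  have hsum := congrArg OmegaCount hde
  rw [omegaCount_mul hu hv, omegaCount_mul hd₀ he₀] at hsum
  refine ⟨d, e, by linear_combination (g * g) * hde, ?_, ?_⟩
  · rw [omegaCount_mul hg hd₀]; omega
  · rw [omegaCount_mul hg he₀]; omega

end OmegaCount

theorem statement_6 {F : Type*} [Field F] (pF pG q rF rG : F[X])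
    (hp : pF * pG ≠ 0) (hr : rF * rG ≠ 0)
    (hcop : IsCoprime (pF * rF) (pG * rG))
    (m n : ℕ) (hm : m = OmegaCount pF) (hn : n = OmegaCount rF) :
    ∀ α β : ℕ, α + β = m + n →
      min m n ≤ α → α ≤ max m n → min m n ≤ β → β ≤ max m n →
      ∃ pF' rF' q' : F[X],
        (∃ c : F, c ≠ 0 ∧ pF' * rF' = C c * (pF * rF)) ∧
        OmegaCount pF' = α ∧ OmegaCount rF' = β ∧
        UnimodEquiv (!![pF' * pG, q'; 0, rF' * rG]) (!![pF * pG, q; 0, rF * rG]) := by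
  subst hm hn
  intro α β hαβ hα₁ hα₂ _ _
  obtain ⟨g, hg⟩ := (IsPrincipalIdealRing.principal (Ideal.span {pF * pG, q, rF * rG})).principal
  obtain ⟨g₁, g₂, rfl, h₁p, h₁r, h₂p, h₂r⟩ := exists_mul_eq_of_isCoprime hcop
    (Ideal.dvd_of_span_eq_span_singleton hg (by simp))
    (Ideal.dvd_of_span_eq_span_singleton hg (by simp))
  obtain ⟨d, e, hde, hd, he⟩ := exists_omegaCount_redistribution (left_ne_zero_of_mul hp)
    (left_ne_zero_of_mul hr) h₁p h₁r hα₁ hα₂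
  have hdet : g₁ * d * pG * (g₁ * e * rG) = pF * pG * (rF * rG) := by
    linear_combination (pG * rG) * hde.symm
  refine ⟨g₁ * d, g₁ * e, g₁ * g₂, ⟨1, one_ne_zero, by rw [hde, C_1, one_mul]⟩, hd, by omega, ?_⟩
  refine unimodEquiv_of_span_eq_of_mul_eq (left_ne_zero_of_mul (hdet ▸ mul_ne_zero hp hr)) hp ?_
    hdet
  rw [hg, Ideal.span_triple_eq_span_singleton_of_dvd (mul_dvd_mul (dvd_mul_right g₁ d) h₂p)
    (mul_dvd_mul (dvd_mul_right g₁ e) h₂r)]
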